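/- Let p be an odd prime and k a field of characteristic p. Let H = k[∂]/(∂^p) and for 0 ≤ i ≤ p−1 let U_i = k[∂]/(∂^{i+1}), viewed as H-modules. Equip U_{p−2} ⊗_k U_{p−2} with the H-module structure in which ∂ acts by ∂⊗1 + 1⊗∂. Then there is an isomorphism of H-modules U_{p−2} ⊗_k U_{p−2} ≅ U_0 ⊕ U_{p−1}^{⊕(p−2)}; that is, the tensor square of U_{p−2} decomposes as a one-dimensional trivial summand plus a free H-module of rank p−2. -/

import Mathlib

open TensorProduct

/-- The cyclic module `k[∂]/(∂^m)` (so `U_i = stmt15U k (i+1)`). -/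
abbrev stmt15U (k : Type*) [Field k] (m : ℕ) : Type _ :=
  Polynomial k ⧸ Ideal.span {(Polynomial.X : Polynomial k) ^ m}

/-- The action of `∂` on `k[∂]/(∂^m)`, i.e. multiplication by (the class of) `X`. -/
noncomputable def stmt15mulX (k : Type*) [Field k] (m : ℕ) :
    stmt15U k m →ₗ[k] stmt15U k m :=
  LinearMap.mulLeft k
    (Ideal.Quotient.mk (Ideal.span {(Polynomial.X : Polynomial k) ^ m}) Polynomial.X)

/-! Write `p = n + 2`, so that `U_{p-2} ⊗ U_{p-2} = k[x, y]/(x^{n+1}, y^{n+1})` with `∂` acting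
as multiplication by `s = x + y`. In characteristic `p`, `s^p = x^p + y^p = 0`, so each `x^j`
(`j < n`) generates a copy of `U_{p-1}`, while the alternating antidiagonal
`w = ∑ₐ (-1)^a x^a y^(n-a)` is killed by `s` and spans a copy of `U_0`. The resulting `H`-linear map
`U_0 ⊕ U_{p-1}^n → U_{p-2} ⊗ U_{p-2}` is between spaces of dimension `(n+1)^2`. Since `∂` is
nilpotent, the map is injective as soon as it is injective on the kernel of `∂`, whose image is
spanned by `w` and the `s^{n+1} x^j`; these are separated by their coefficients at `y^n` and at
`x^{j+1} y^n` (the latter coefficient of `s^{n+1} x^j` is `n + 1 = -1`). -/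

theorem LinearMap.injective_of_isNilpotent_of_injective_on_ker
    {R M N : Type*} [Semiring R] [AddCommGroup M] [Module R M] [AddCommGroup N] [Module R N]
    (f : M →ₗ[R] N) {T : Module.End R M} (hT : IsNilpotent T)
    (hker : ∀ v, f v = 0 → f (T v) = 0) (hsoc : ∀ v, T v = 0 → f v = 0 → v = 0) :
    Function.Injective f := by
  obtain ⟨n, hn⟩ := hT
  suffices h : ∀ n v, (T ^ n) v = 0 → f v = 0 → v = 0 by
    exact (injective_iff_map_eq_zero f).2 fun v hv => h n v (by rw [hn, zero_apply]) hv
  intro n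
  induction n with
  | zero => exact fun v hv _ => hv
  | succ n ih =>
    intro v hv hfv
    rw [pow_succ, Module.End.mul_apply] at hv
    exact hsoc v (ih (T v) hv (hker v hfv)) hfv

noncomputable section

open Polynomial

-- `TruncatedPolynomial k m` is definitionally `stmt15U k m`, i.e. the paper's `U_{m-1}`.
variable (k : Type*) [Field k] in
abbrev TruncatedPolynomial (m : ℕ) : Type _ := AdjoinRoot (X ^ m : k[X])

namespace TruncatedPolynomial

variable {k : Type*} [Field k]

variable (k) in
def gen (m : ℕ) : TruncatedPolynomial k m := AdjoinRoot.root (X ^ m)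

lemma gen_pow_self (m : ℕ) : gen k m ^ m = 0 := by
  rw [gen, ← AdjoinRoot.mk_X, ← map_pow, AdjoinRoot.mk_self]

lemma gen_pow_eq_zero_of_le {m t : ℕ} (h : m ≤ t) : gen k m ^ t = 0 := by
  rw [← Nat.sub_add_cancel h, pow_add, gen_pow_self, mul_zero]

variable (k) in
def basis (m : ℕ) : Module.Basis (Fin m) k (TruncatedPolynomial k m) :=
  (AdjoinRoot.powerBasis' (monic_X_pow m)).basis.reindex (finCongr (natDegree_X_pow m))

lemma basis_apply (m : ℕ) (i : Fin m) : basis k m i = gen k m ^ (i : ℕ) := by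
  simp [basis, gen, finCongr]

lemma basis_repr_gen_pow (m u : ℕ) (a : Fin m) :
    (basis k m).repr (gen k m ^ u) a = if u = a then 1 else 0 := by
  rcases lt_or_ge u m with hu | hu
  · rw [← Fin.val_mk hu, ← basis_apply, Module.Basis.repr_self, Finsupp.single_apply]
    simp [Fin.ext_iff]
  · rw [gen_pow_eq_zero_of_le hu, map_zero, Finsupp.zero_apply, if_neg (by omega)]

instance (m : ℕ) : Module.Finite k (TruncatedPolynomial k m) := .of_basis (basis k m)

lemma finrank_eq (m : ℕ) : Module.finrank k (TruncatedPolynomial k m) = m := by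
  simp [Module.finrank_eq_card_basis (basis k m)]

lemma exists_eq_smul_gen_pow_of_gen_mul_eq_zero {n : ℕ} {u : TruncatedPolynomial k (n + 1)}
    (hu : gen k (n + 1) * u = 0) : ∃ a : k, u = a • gen k (n + 1) ^ n := by
  obtain ⟨g, rfl⟩ := AdjoinRoot.mk_surjective u
  obtain ⟨h, rfl⟩ : X ^ n ∣ g := by
    rw [gen, ← AdjoinRoot.mk_X, ← map_mul, AdjoinRoot.mk_eq_zero, pow_succ'] at hu
    exact (mul_dvd_mul_iff_left X_ne_zero).1 hu
  obtain ⟨h', hh'⟩ := X_dvd_sub_C (p := h)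
  have hmk : AdjoinRoot.mk (X ^ (n + 1)) h
      = algebraMap k _ (h.coeff 0) + gen k (n + 1) * AdjoinRoot.mk _ h' := by
    rw [AdjoinRoot.algebraMap_eq, ← AdjoinRoot.mk_C, gen, ← AdjoinRoot.mk_X, ← map_mul, ← map_add,
      ← hh', add_sub_cancel]
  refine ⟨h.coeff 0, ?_⟩
  rw [map_mul, map_pow, AdjoinRoot.mk_X, ← gen, hmk, mul_add, ← mul_assoc, ← pow_succ,
    gen_pow_self, zero_mul, add_zero, Algebra.smul_def, mul_comm]

variable (k) in
abbrev TensorSquare (m : ℕ) : Type _ := TruncatedPolynomial k m ⊗[k] TruncatedPolynomial k m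

namespace TensorSquare

open Finset

variable (k) in
def genL (m : ℕ) : TensorSquare k m := gen k m ⊗ₜ 1

variable (k) in
def genR (m : ℕ) : TensorSquare k m := 1 ⊗ₜ gen k m

variable (k) in
def genΔ (m : ℕ) : TensorSquare k m := genL k m + genR k m

variable (k) in
def antidiag (n : ℕ) : TensorSquare k (n + 1) :=
  ∑ a ∈ range (n + 1), (-1 : k) ^ a • ((gen k (n + 1) ^ a) ⊗ₜ (gen k (n + 1) ^ (n - a)))

variable (k) in
def basis (m : ℕ) : Module.Basis (Fin m × Fin m) k (TensorSquare k m) :=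
  (TruncatedPolynomial.basis k m).tensorProduct (TruncatedPolynomial.basis k m)

lemma basis_repr_tmul_gen_pow (m u v : ℕ) (ab : Fin m × Fin m) :
    (basis k m).repr ((gen k m ^ u) ⊗ₜ (gen k m ^ v)) ab
      = if u = ab.1 ∧ v = ab.2 then 1 else 0 := by
  rw [basis, Module.Basis.tensorProduct_repr_tmul_apply, basis_repr_gen_pow, basis_repr_gen_pow,
    smul_eq_mul, ite_zero_mul_ite_zero, one_mul]
  exact if_congr and_comm rfl rfl

lemma rTensor_add_lTensor_mulLeft_gen (m : ℕ) (v : TensorSquare k m) :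
    (LinearMap.mulLeft k (gen k m)).rTensor _ v + (LinearMap.mulLeft k (gen k m)).lTensor _ v
      = genΔ k m * v := by
  induction v using TensorProduct.induction_on with
  | zero => simp
  | tmul u w => simp [genΔ, genL, genR, add_mul]
  | add v w hv hw => simp only [map_add, mul_add, ← hv, ← hw]; abel

lemma genΔ_pow_mul_genL_pow (m n j : ℕ) :
    genΔ k m ^ n * genL k m ^ j
      = ∑ c ∈ range (n + 1), (n.choose c : k) • ((gen k m ^ (c + j)) ⊗ₜ (gen k m ^ (n - c))) := by
  rw [genΔ, add_pow, sum_mul]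
  refine sum_congr rfl fun c _ => ?_
  simp only [genL, genR, Algebra.TensorProduct.tmul_pow, one_pow]
  rw [Algebra.TensorProduct.tmul_mul_tmul, mul_one, one_mul, mul_right_comm,
    Algebra.TensorProduct.tmul_mul_tmul, mul_one, ← pow_add, mul_comm,
    Nat.cast_smul_eq_nsmul, nsmul_eq_mul]

lemma genΔ_mul_antidiag (n : ℕ) : genΔ k (n + 1) * antidiag k n = 0 := by
  set t : ℕ → TensorSquare k (n + 1) := fun a =>
    (-1 : k) ^ a • ((gen k (n + 1) ^ a) ⊗ₜ (gen k (n + 1) ^ (n + 1 - a)))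
  have hstep : ∀ a ∈ range (n + 1), genΔ k (n + 1) *
      ((-1 : k) ^ a • ((gen k (n + 1) ^ a) ⊗ₜ (gen k (n + 1) ^ (n - a)))) = t a - t (a + 1) := by
    intro a ha
    have : n + 1 - a = n - a + 1 := by have := mem_range.1 ha; omega
    simp only [t, genΔ, genL, genR, mul_smul_comm, add_mul, Algebra.TensorProduct.tmul_mul_tmul,
      one_mul, ← pow_succ', pow_succ (-1 : k), mul_neg_one, neg_smul, sub_neg_eq_add, this,
      Nat.add_sub_add_right, smul_add, add_comm]
  rw [antidiag, mul_sum, sum_congr rfl hstep, sum_range_sub']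
  simp [t, gen_pow_self]

lemma genΔ_pow_eq_zero {p m : ℕ} (hp : p.Prime) [CharP k p] (hm : m ≤ p) : genΔ k m ^ p = 0 := by
  have hchar : (p : TensorSquare k m) = 0 := by
    rw [← map_natCast (algebraMap k _), CharP.cast_eq_zero, map_zero]
  rw [genΔ, add_pow_prime_eq' hp, hchar, zero_mul, add_zero, genL, genR,
    Algebra.TensorProduct.tmul_pow, Algebra.TensorProduct.tmul_pow, gen_pow_eq_zero_of_le hm]
  simp

lemma basis_repr_antidiag (n : ℕ) (a : Fin (n + 1)) :
    (basis k (n + 1)).repr (antidiag k n) (a, Fin.last n) = if (a : ℕ) = 0 then 1 else 0 := by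
  rw [antidiag, map_sum, Finsupp.finsetSum_apply, sum_eq_single 0]
  · simp only [map_smul, Finsupp.smul_apply, basis_repr_tmul_gen_pow]
    simp [eq_comm]
  · intro b hb hb0
    have := mem_range.1 hb
    rw [map_smul, Finsupp.smul_apply, basis_repr_tmul_gen_pow, Fin.val_last, if_neg (by omega),
      smul_zero]
  · simp

lemma basis_repr_genΔ_pow_mul_genL_pow (n j : ℕ) (a : Fin (n + 1)) :
    (basis k (n + 1)).repr (genΔ k (n + 1) ^ (n + 1) * genL k (n + 1) ^ j) (a, Fin.last n)
      = if (a : ℕ) = j + 1 then (n + 1 : k) else 0 := by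
  rw [genΔ_pow_mul_genL_pow, map_sum, Finsupp.finsetSum_apply, sum_eq_single 1]
  · simp only [map_smul, Finsupp.smul_apply, basis_repr_tmul_gen_pow]
    simp [eq_comm, add_comm]
  · intro c hc hc1
    have := mem_range.1 hc
    rw [map_smul, Finsupp.smul_apply, basis_repr_tmul_gen_pow, Fin.val_last, if_neg (by omega),
      smul_zero]
  · simp

end TensorSquare

open TensorSquare

variable (k) in
def liftGenΔ {p : ℕ} (m : ℕ) (hp : p.Prime) [CharP k p] (hm : m ≤ p) :
    TruncatedPolynomial k p →ₐ[k] TensorSquare k m :=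
  AdjoinRoot.liftAlgHom (X ^ p) (Algebra.ofId k _) (genΔ k m) (by simp [genΔ_pow_eq_zero hp hm])

lemma liftGenΔ_gen {p m : ℕ} (hp : p.Prime) [CharP k p] (hm : m ≤ p) :
    liftGenΔ k m hp hm (gen k p) = genΔ k m :=
  AdjoinRoot.liftAlgHom_root ..

section Decomposition

variable {n : ℕ}

variable (k) in
abbrev Summands (n : ℕ) : Type _ :=
  TruncatedPolynomial k 1 × (Fin n → TruncatedPolynomial k (n + 2))

variable (k n) in
def shift : Module.End k (Summands k n) :=
  (LinearMap.mulLeft k (gen k 1)).prodMap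
    (LinearMap.piMap fun _ => LinearMap.mulLeft k (gen k (n + 2)))

lemma shift_pow_apply (t : ℕ) (v : Summands k n) :
    (shift k n ^ t) v = (gen k 1 ^ t * v.1, fun j => gen k (n + 2) ^ t * v.2 j) := by
  induction t with
  | zero => simp
  | succ t ih =>
    rw [pow_succ' (shift k n), Module.End.mul_apply, ih]
    refine Prod.ext ?_ (funext fun j => ?_) <;> simp [shift, pow_succ' (gen k _), mul_assoc]

lemma isNilpotent_shift : IsNilpotent (shift k n) :=
  ⟨n + 2, LinearMap.ext fun v => by
    simp [shift_pow_apply, gen_pow_eq_zero_of_le, Prod.ext_iff, funext_iff]⟩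

lemma finrank_summands :
    Module.finrank k (Summands k n) = Module.finrank k (TensorSquare k (n + 1)) := by
  simp only [Module.finrank_prod, Module.finrank_pi_fintype, Module.finrank_tensorProduct,
    finrank_eq, Finset.sum_const, Finset.card_univ, Fintype.card_fin, smul_eq_mul]
  ring

variable [CharP k (n + 2)] (hp : (n + 2).Prime)

variable (k) in
def decompMap : Summands k n →ₗ[k] TensorSquare k (n + 1) :=
  (((TruncatedPolynomial.basis k 1).coord 0).smulRight (antidiag k n)).coprod
    (∑ j : Fin n, (LinearMap.mulRight k (genL k (n + 1) ^ (j : ℕ))) ∘ₗ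
      (liftGenΔ k (n + 1) hp (by omega)).toLinearMap ∘ₗ LinearMap.proj j)

lemma decompMap_apply (v : Summands k n) :
    decompMap k hp v = (TruncatedPolynomial.basis k 1).coord 0 v.1 • antidiag k n
      + ∑ j, liftGenΔ k (n + 1) hp (by omega) (v.2 j) * genL k (n + 1) ^ (j : ℕ) := by
  simp [decompMap]

lemma decompMap_shift (v : Summands k n) :
    decompMap k hp (shift k n v) = genΔ k (n + 1) * decompMap k hp v := by
  have hgen : gen k 1 = 0 := by simpa using gen_pow_self (k := k) 1
  simp only [decompMap_apply, shift, LinearMap.prodMap_apply, LinearMap.coe_piMap, Pi.map_apply,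
    LinearMap.mulLeft_apply, hgen, zero_mul, map_zero, zero_smul, zero_add, mul_add, mul_smul_comm,
    genΔ_mul_antidiag, smul_zero, map_mul, liftGenΔ_gen, Finset.mul_sum, mul_assoc]

lemma decompMap_injective : Function.Injective (decompMap k hp) := by
  refine (decompMap k hp).injective_of_isNilpotent_of_injective_on_ker isNilpotent_shift
    (fun v hv => by rw [decompMap_shift, hv, mul_zero]) fun ⟨c, f⟩ hshift hv => ?_
  choose a ha using fun j => exists_eq_smul_gen_pow_of_gen_mul_eq_zero (n := n + 1) (u := f j)
    (congrFun (congrArg Prod.snd hshift) j)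
  replace hv : (TruncatedPolynomial.basis k 1).coord 0 c • antidiag k n
      + ∑ j, a j • (genΔ k (n + 1) ^ (n + 1) * genL k (n + 1) ^ (j : ℕ)) = 0 := by
    simpa [decompMap_apply, ha, smul_mul_assoc, liftGenΔ_gen] using hv
  have hcoord (b : Fin (n + 1)) :=
    congrArg (fun w => (TensorSquare.basis k (n + 1)).repr w (b, Fin.last n)) hv
  have hc : (TruncatedPolynomial.basis k 1).coord 0 c = 0 := by
    simpa [basis_repr_antidiag, basis_repr_genΔ_pow_mul_genL_pow] using hcoord 0
  have hn : (n + 1 : k) ≠ 0 := fun h => by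
    have := CharP.cast_eq_zero k (n + 2)
    push_cast at this
    exact one_ne_zero (by linear_combination this - h)
  have ha0 (j : Fin n) : a j = 0 := by
    have := hcoord ⟨j + 1, by omega⟩
    simpa [basis_repr_genΔ_pow_mul_genL_pow, hc, Fin.val_inj, hn] using this
  have hc0 : c = 0 := (TruncatedPolynomial.basis k 1).forall_coord_eq_zero_iff.1 fun i => by
    rwa [Subsingleton.elim i 0]
  simp [hc0, funext_iff, ha, ha0]

variable (k) in
def decompEquiv : Summands k n ≃ₗ[k] TensorSquare k (n + 1) :=
  .ofBijective (decompMap k hp) ⟨decompMap_injective hp,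
    LinearMap.injective_iff_surjective_of_finrank_eq_finrank finrank_summands |>.1
      (decompMap_injective hp)⟩

lemma decompEquiv_symm_genΔ_mul (v : TensorSquare k (n + 1)) :
    (decompEquiv k hp).symm (genΔ k (n + 1) * v) = shift k n ((decompEquiv k hp).symm v) := by
  rw [LinearEquiv.symm_apply_eq]
  conv_lhs => rw [← (decompEquiv k hp).apply_symm_apply v]
  exact (decompMap_shift hp _).symm

end Decomposition

end TruncatedPolynomial

end

theorem stmt_15 (p : ℕ) (hp : p.Prime) (k : Type*) [Field k] [CharP k p] :
    ∃ e : (stmt15U k (p - 1) ⊗[k] stmt15U k (p - 1)) ≃ₗ[k]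
          (stmt15U k 1 × (Fin (p - 2) → stmt15U k p)),
      ∀ v : stmt15U k (p - 1) ⊗[k] stmt15U k (p - 1),
        e (LinearMap.rTensor (stmt15U k (p - 1)) (stmt15mulX k (p - 1)) v
            + LinearMap.lTensor (stmt15U k (p - 1)) (stmt15mulX k (p - 1)) v)
          = (stmt15mulX k 1 (e v).1, fun j => stmt15mulX k p ((e v).2 j)) := by
  obtain ⟨n, rfl⟩ : ∃ n, p = n + 2 := ⟨p - 2, by have := hp.two_le; omega⟩
  refine ⟨(TruncatedPolynomial.decompEquiv k hp).symm, fun v => ?_⟩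
  exact (congrArg _
    (TruncatedPolynomial.TensorSquare.rTensor_add_lTensor_mulLeft_gen (n + 1) v)).trans
      (TruncatedPolynomial.decompEquiv_symm_genΔ_mul hp v)
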